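/- Every geodesic in the Grassmann graph Γ_k(H) joining two orthogonal k-dimensional subspaces consists of mutually compatible elements. -/

import Mathlib

/-- The Grassmann graph on the `k`-dimensional subspaces of `H`: two distinct
`k`-dimensional subspaces are adjacent iff their intersection has dimension `k-1`. -/
def GrassmannGraph (H : Type*) [NormedAddCommGroup H] [InnerProductSpace ℂ H] (k : ℕ) :
    SimpleGraph {X : Submodule ℂ H // Module.finrank ℂ ↥X = k} where
  Adj X Y := Module.finrank ℂ ↥(X.1 ⊓ Y.1) = k - 1 ∧ X ≠ Y
  symm := by
    constructor
    intro X Y h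
    refine ⟨?_, h.2.symm⟩
    rw [inf_comm]
    exact h.1
  loopless := ⟨fun X h => h.2 rfl⟩

def Compatible {H : Type*} [NormedAddCommGroup H] [InnerProductSpace ℂ H]
    (X Y : Submodule ℂ H) : Prop :=
  ∃ X' Y' Z : Submodule ℂ H, X' ⟂ Y' ∧ X' ⟂ Z ∧ Y' ⟂ Z ∧ X = X' ⊔ Z ∧ Y = Y' ⊔ Z

/-!
Let `V₀ = X, …, V_k = Y` be the geodesic. For any subspace `S`, one step changes
`dim (Vᵢ ⊓ S)` by at most one, because `Vᵢ ⊓ Vᵢ₊₁` has codimension one in `Vᵢ`. As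
`dim (V₀ ⊓ X) = k` and `dim (V_k ⊓ X) = 0`, the dimension drops by exactly one at every
step, so `dim (Vᵢ ⊓ X) = k - i`, and an exact drop forces `Vᵢ₊₁ ⊓ X ≤ Vᵢ ⊓ X`; symmetrically
`dim (Vᵢ ⊓ Y) = i` with `Vᵢ ⊓ Y` increasing. Since `X ⟂ Y`, counting dimensions gives
`Vᵢ = Vᵢ ⊓ X ⊔ Vᵢ ⊓ Y`. For `i ≤ j`, the subspaces `Vᵢ` and `Vⱼ` then share
`Z = Vⱼ ⊓ X ⊔ Vᵢ ⊓ Y` and differ by the orthogonal complements of `Vⱼ ⊓ X` in `Vᵢ ⊓ X`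
and of `Vᵢ ⊓ Y` in `Vⱼ ⊓ Y`, which lie in `X` and `Y` respectively.
-/

open Module Submodule

namespace Submodule

variable {K E : Type*} [DivisionRing K] [AddCommGroup E] [Module K E]

theorem finrank_inf_add_finrank_inf_le (V W S : Submodule K E) [FiniteDimensional K V] :
    finrank K ↥(V ⊓ S) + finrank K ↥(V ⊓ W) ≤ finrank K ↥(V ⊓ W ⊓ S) + finrank K V := by
  have hsup : finrank K ↥(V ⊓ S ⊔ V ⊓ W) ≤ finrank K V :=
    finrank_mono (sup_le inf_le_left inf_le_left)
  have hmod := finrank_sup_add_finrank_inf_eq (V ⊓ S) (V ⊓ W)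
  rw [← inf_inf_distrib_left, inf_comm S W, ← inf_assoc] at hmod
  omega

theorem inf_sup_inf_eq_of_finrank_le {V A B : Submodule K E} [FiniteDimensional K V]
    (hAB : Disjoint A B) (h : finrank K V ≤ finrank K ↥(V ⊓ A) + finrank K ↥(V ⊓ B)) :
    V ⊓ A ⊔ V ⊓ B = V := by
  have hbot : V ⊓ A ⊓ (V ⊓ B) = ⊥ :=
    (hAB.mono inf_le_right inf_le_right).eq_bot
  have hmod := finrank_sup_add_finrank_inf_eq (V ⊓ A) (V ⊓ B)
  rw [hbot, finrank_bot] at hmod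
  exact eq_of_le_of_finrank_le (sup_le inf_le_left inf_le_left) (by omega)

end Submodule

theorem Nat.apply_le_apply_add_sub {f : ℕ → ℕ} {n : ℕ}
    (hf : ∀ i < n, f i ≤ f (i + 1) + 1) {i j : ℕ} (hij : i ≤ j) (hj : j ≤ n) :
    f i ≤ f j + (j - i) := by
  induction j, hij using Nat.le_induction with
  | base => simp
  | succ j hij ih =>
    have hstep := hf j (by omega)
    have hih := ih (by omega)
    omega

theorem Nat.apply_eq_sub_of_le_succ_add_one {f : ℕ → ℕ} {n : ℕ}
    (hf : ∀ i < n, f i ≤ f (i + 1) + 1) (h0 : n ≤ f 0) (hn : f n = 0) {i : ℕ} (hi : i ≤ n) :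
    f i = n - i := by
  have hlo := Nat.apply_le_apply_add_sub hf (Nat.zero_le i) hi
  have hhi := Nat.apply_le_apply_add_sub hf hi le_rfl
  omega

section Compatible

variable {H : Type*} [NormedAddCommGroup H] [InnerProductSpace ℂ H]

theorem Compatible.refl (X : Submodule ℂ H) : Compatible X X :=
  ⟨⊥, ⊥, X, isOrtho_bot_left, isOrtho_bot_left, isOrtho_bot_left,
    (bot_sup_eq X).symm, (bot_sup_eq X).symm⟩

theorem Compatible.symm {X Y : Submodule ℂ H} (h : Compatible X Y) : Compatible Y X := by
  obtain ⟨X', Y', Z, hX'Y', hX'Z, hY'Z, rfl, rfl⟩ := h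
  exact ⟨Y', X', Z, hX'Y'.symm, hY'Z, hX'Z, rfl, rfl⟩

theorem compatible_sup_sup_of_isOrtho {X Y A A' B B' : Submodule ℂ H} (hXY : X ⟂ Y)
    (hA' : A' ≤ A) (hA : A ≤ X) (hB : B ≤ B') (hB' : B' ≤ Y)
    [A'.HasOrthogonalProjection] [B.HasOrthogonalProjection] :
    Compatible (A ⊔ B) (A' ⊔ B') := by
  refine ⟨A'ᗮ ⊓ A, Bᗮ ⊓ B', A' ⊔ B, ?_, ?_, ?_, ?_, ?_⟩
  · exact hXY.mono (inf_le_right.trans hA) (inf_le_right.trans hB')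
  · rw [isOrtho_sup_right]
    exact ⟨(isOrtho_orthogonal_left A').mono_left inf_le_left,
      hXY.mono (inf_le_right.trans hA) (hB.trans hB')⟩
  · rw [isOrtho_sup_right]
    exact ⟨hXY.symm.mono (inf_le_right.trans hB') (hA'.trans hA),
      (isOrtho_orthogonal_left B).mono_left inf_le_left⟩
  · rw [← sup_assoc, sup_comm (A'ᗮ ⊓ A), sup_orthogonal_inf_of_hasOrthogonalProjection hA']
  · rw [sup_comm A' B, ← sup_assoc, sup_comm (Bᗮ ⊓ B'),
      sup_orthogonal_inf_of_hasOrthogonalProjection hB, sup_comm]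

end Compatible

namespace GrassmannGraph

variable {H : Type*} [NormedAddCommGroup H] [InnerProductSpace ℂ H] {k : ℕ}

theorem finiteDimensional (hk : 0 < k) (X : {X : Submodule ℂ H // finrank ℂ ↥X = k}) :
    FiniteDimensional ℂ X.1 :=
  Module.finite_of_finrank_pos (by rw [X.2]; exact hk)

theorem finrank_eq_finrank_inf_add_one_of_adj (hk : 0 < k)
    {X Y : {X : Submodule ℂ H // finrank ℂ ↥X = k}} (hXY : (GrassmannGraph H k).Adj X Y) :
    finrank ℂ X.1 = finrank ℂ ↥(X.1 ⊓ Y.1) + 1 := by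
  rw [hXY.1, X.2]
  omega

theorem finrank_inf_le_of_adj (hk : 0 < k) {X Y : {X : Submodule ℂ H // finrank ℂ ↥X = k}}
    (hXY : (GrassmannGraph H k).Adj X Y) (S : Submodule ℂ H) :
    finrank ℂ ↥(X.1 ⊓ S) ≤ finrank ℂ ↥(Y.1 ⊓ S) + 1 := by
  have := finiteDimensional hk X
  have := finiteDimensional hk Y
  have hmod := finrank_inf_add_finrank_inf_le X.1 Y.1 S
  have hmono : finrank ℂ ↥(X.1 ⊓ Y.1 ⊓ S) ≤ finrank ℂ ↥(Y.1 ⊓ S) :=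
    finrank_mono (inf_le_inf_right S inf_le_right)
  have hstep := finrank_eq_finrank_inf_add_one_of_adj hk hXY
  omega

theorem inf_le_inf_of_adj (hk : 0 < k) {X Y : {X : Submodule ℂ H // finrank ℂ ↥X = k}}
    (hXY : (GrassmannGraph H k).Adj X Y) {S : Submodule ℂ H}
    (hS : finrank ℂ ↥(Y.1 ⊓ S) + 1 ≤ finrank ℂ ↥(X.1 ⊓ S)) :
    Y.1 ⊓ S ≤ X.1 ⊓ S := by
  have := finiteDimensional hk X
  have := finiteDimensional hk Y
  have hmod := finrank_inf_add_finrank_inf_le X.1 Y.1 S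
  have hstep := finrank_eq_finrank_inf_add_one_of_adj hk hXY
  have heq : X.1 ⊓ Y.1 ⊓ S = Y.1 ⊓ S :=
    eq_of_le_of_finrank_le (inf_le_inf_right S inf_le_right) (by omega)
  rw [← heq]
  exact inf_le_inf_right S inf_le_left

variable {X Y : {X : Submodule ℂ H // finrank ℂ ↥X = k}} (hk : 0 < k) (hXY : Disjoint X.1 Y.1)
  {p : (GrassmannGraph H k).Walk X Y} (hp : p.length = k)
include hk hXY hp

theorem finrank_getVert_inf_start {i : ℕ} (hi : i ≤ k) :
    finrank ℂ ↥((p.getVert i).1 ⊓ X.1) = k - i := by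
  refine Nat.apply_eq_sub_of_le_succ_add_one (f := fun i ↦ finrank ℂ ↥((p.getVert i).1 ⊓ X.1))
    (fun i hi ↦ finrank_inf_le_of_adj hk (p.adj_getVert_succ (by omega)) X.1) ?_ ?_ hi
  · show k ≤ finrank ℂ ↥((p.getVert 0).1 ⊓ X.1)
    rw [p.getVert_zero, inf_idem, X.2]
  · show finrank ℂ ↥((p.getVert k).1 ⊓ X.1) = 0
    have hend : p.getVert k = Y := by simpa only [hp] using p.getVert_length
    rw [hend, hXY.symm.eq_bot, finrank_bot]

theorem getVert_inf_start_antitone {i j : ℕ} (hij : i ≤ j) (hj : j ≤ k) :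
    (p.getVert j).1 ⊓ X.1 ≤ (p.getVert i).1 ⊓ X.1 := by
  induction j, hij using Nat.le_induction with
  | base => exact le_rfl
  | succ j hij ih =>
    refine le_trans (inf_le_inf_of_adj hk (p.adj_getVert_succ (by omega)) ?_) (ih (by omega))
    rw [finrank_getVert_inf_start hk hXY hp (by omega : j ≤ k),
      finrank_getVert_inf_start hk hXY hp hj]
    omega

theorem finrank_getVert_inf_end {i : ℕ} (hi : i ≤ k) :
    finrank ℂ ↥((p.getVert i).1 ⊓ Y.1) = i := by
  have := finrank_getVert_inf_start hk hXY.symm (p := p.reverse) (p.length_reverse.trans hp) (by omega : k - i ≤ k)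
  rwa [p.getVert_reverse, hp, Nat.sub_sub_self hi] at this

theorem getVert_inf_end_monotone {i j : ℕ} (hij : i ≤ j) (hj : j ≤ k) :
    (p.getVert i).1 ⊓ Y.1 ≤ (p.getVert j).1 ⊓ Y.1 := by
  have := getVert_inf_start_antitone hk hXY.symm (p := p.reverse) (p.length_reverse.trans hp)
    (by omega : k - j ≤ k - i) (by omega)
  rwa [p.getVert_reverse, p.getVert_reverse, hp, Nat.sub_sub_self hj,
    Nat.sub_sub_self (hij.trans hj)] at this

theorem getVert_eq_inf_sup_inf {i : ℕ} (hi : i ≤ k) :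
    (p.getVert i).1 ⊓ X.1 ⊔ (p.getVert i).1 ⊓ Y.1 = (p.getVert i).1 := by
  have := finiteDimensional hk (p.getVert i)
  refine inf_sup_inf_eq_of_finrank_le hXY ?_
  rw [finrank_getVert_inf_start hk hXY hp hi, finrank_getVert_inf_end hk hXY hp hi, (p.getVert i).2]
  omega

end GrassmannGraph

open GrassmannGraph

theorem stmt_13_general {H : Type*} [NormedAddCommGroup H] [InnerProductSpace ℂ H] {k : ℕ}
    (X Y : {X : Submodule ℂ H // Module.finrank ℂ ↥X = k})
    (hXY : X.1 ⟂ Y.1)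
    (p : (GrassmannGraph H k).Walk X Y) (hp : p.length = k) :
    ∀ i ≤ k, ∀ j ≤ k, Compatible (p.getVert i).1 (p.getVert j).1 := by
  rcases Nat.eq_zero_or_pos k with rfl | hk
  · intro i hi j hj
    obtain rfl : i = 0 := by omega
    obtain rfl : j = 0 := by omega
    exact Compatible.refl _
  have hdisj := hXY.disjoint
  have hcompat : ∀ i j, i ≤ j → j ≤ k → Compatible (p.getVert i).1 (p.getVert j).1 := by
    intro i j hij hj
    have := finiteDimensional hk (p.getVert j)
    have := finiteDimensional hk (p.getVert i)
    rw [← getVert_eq_inf_sup_inf hk hdisj hp (hij.trans hj), ← getVert_eq_inf_sup_inf hk hdisj hp hj]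
    exact compatible_sup_sup_of_isOrtho hXY (getVert_inf_start_antitone hk hdisj hp hij hj)
      inf_le_right (getVert_inf_end_monotone hk hdisj hp hij hj) inf_le_right
  intro i hi j hj
  rcases le_total i j with hij | hji
  · exact hcompat i j hij hj
  · exact (hcompat j i hji hi).symm

theorem stmt_13 {H : Type*} [NormedAddCommGroup H] [InnerProductSpace ℂ H] {k : ℕ}
    (hdim : 2 * k ≤ Module.rank ℂ H)
    (X Y : {X : Submodule ℂ H // Module.finrank ℂ ↥X = k})
    (hXY : X.1 ⟂ Y.1)
    (p : (GrassmannGraph H k).Walk X Y) (hp : p.length = k) :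
    ∀ i ≤ k, ∀ j ≤ k, Compatible (p.getVert i).1 (p.getVert j).1 :=
  stmt_13_general X Y hXY p hp
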